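/- arXiv:2410.07007 — 5 statements merged into one kernel-verified Lean document; each statement's English description precedes it below -/
import Mathlib

section
/- With P_n(x) = det(M_n(x)) as above, for all n > 1: P_{2n}(x) = (P_n(x) − x·P_{n−1}(x))·(P_n(x) + x·P_{n−1}(x)). -/
open Matrix Polynomial

noncomputable def Mmat (n : ℕ) (x : ℂ) : Matrix (Fin n) (Fin n) ℂ :=
  Matrix.of fun i j =>
    if (i : ℕ) = (j : ℕ) then 1
    else if (i : ℕ) + 1 = (j : ℕ) ∨ (j : ℕ) + 1 = (i : ℕ) then x else 0

noncomputable def P (n : ℕ) (x : ℂ) : ℂ := (Mmat n x).det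

/-! Expanding the determinant along the first row gives the three-term recurrence
`P (n + 2) = P (n + 1) - x² P n`, from which the addition formula
`P (m + n + 2) = P (m + 1) P (n + 1) - x² P m P n` follows by induction on `n`
(the case `(m, n + 1)` is the case `(m + 1, n)` rewritten with the recurrence).
For `m = n` its right-hand side is a difference of squares. -/

lemma P_zero (x : ℂ) : P 0 x = 1 := by simp [P]

lemma P_one (x : ℂ) : P 1 x = 1 := by simp [P, Mmat]

lemma Mmat_submatrix_succ (n : ℕ) (x : ℂ) :
    (Mmat (n + 1) x).submatrix Fin.succ Fin.succ = Mmat n x := by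
  ext i j
  simp only [submatrix_apply, Mmat, of_apply, Fin.val_succ]
  grind

lemma det_Mmat_submatrix_succ_succAbove_one (n : ℕ) (x : ℂ) :
    ((Mmat (n + 2) x).submatrix Fin.succ (Fin.succAbove 1)).det = x * P n x := by
  set N := (Mmat (n + 2) x).submatrix Fin.succ (Fin.succAbove 1)
  have hN_zero : N 0 0 = x := by simp [N, Mmat]
  have hN_succ : ∀ i : Fin n, N i.succ 0 = 0 := fun i => by simp [N, Mmat]
  have hN_minor : N.submatrix Fin.succ Fin.succ = Mmat n x := by
    rw [← Mmat_submatrix_succ, ← Mmat_submatrix_succ]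
    ext i j
    simp [N]
  rw [det_succ_column_zero, Fin.sum_univ_succ, Finset.sum_eq_zero fun i _ => by simp [hN_succ],
    hN_zero, Fin.succAbove_zero, hN_minor, P]
  simp

lemma P_succ_succ (n : ℕ) (x : ℂ) : P (n + 2) x = P (n + 1) x - x ^ 2 * P n x := by
  have h00 : Mmat (n + 2) x 0 0 = 1 := by simp [Mmat]
  have h01 : Mmat (n + 2) x 0 1 = x := by simp [Mmat]
  have hrow : ∀ j : Fin n, Mmat (n + 2) x 0 j.succ.succ = 0 := fun j => by simp [Mmat]
  rw [P, det_succ_row_zero, Fin.sum_univ_succ, Fin.sum_univ_succ,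
    Finset.sum_eq_zero fun j _ => by simp [hrow], Fin.succAbove_zero, Mmat_submatrix_succ,
    Fin.succ_zero_eq_one, det_Mmat_submatrix_succ_succAbove_one, h00, h01]
  simp only [Fin.val_zero, Fin.val_one, pow_zero, pow_one, P]
  ring

lemma P_add (m n : ℕ) (x : ℂ) :
    P (m + n + 2) x = P (m + 1) x * P (n + 1) x - x ^ 2 * P m x * P n x := by
  induction n generalizing m with
  | zero => simp [P_succ_succ, P_zero, P_one]
  | succ n ih =>
    rw [show m + (n + 1) + 2 = m + 1 + n + 2 by ring, ih, P_succ_succ m, P_succ_succ n]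
    ring

theorem P_even_factor (n : ℕ) (hn : 1 < n) (x : ℂ) :
    P (2 * n) x = (P n x - x * P (n - 1) x) * (P n x + x * P (n - 1) x) := by
  obtain ⟨k, rfl⟩ : ∃ k, n = k + 1 := ⟨n - 1, by omega⟩
  rw [show 2 * (k + 1) = k + k + 2 by ring, P_add, Nat.add_sub_cancel]
  ring
end

section
/- With P_n(x) = det(M_n(x)) as above, for all n > 1: P_{2n−1}(x) − x^{2n−1} = (P_n(x) − x·P_{n−1}(x))·(P_{n−1}(x) + x·P_{n−2}(x)). -/
open Matrix Polynomial

lemma sub00 (n : ℕ) (x : ℂ) :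
    (Mmat (n+2) x).submatrix Fin.succ Fin.succ = Mmat (n+1) x := by
  ext i j
  simp only [submatrix_apply, Mmat, of_apply, Fin.val_succ]
  have h1 : ((i:ℕ)+1 = (j:ℕ)+1) ↔ ((i:ℕ) = (j:ℕ)) := by omega
  have h2 : ((i:ℕ)+1+1 = (j:ℕ)+1 ∨ (j:ℕ)+1+1 = (i:ℕ)+1) ↔ ((i:ℕ)+1 = (j:ℕ) ∨ (j:ℕ)+1 = (i:ℕ)) := by omega
  simp only [h1, h2]



lemma succAbove_one_val (n : ℕ) (j : Fin n) :
    (((1 : Fin (n+2)).succAbove j.succ) : ℕ) = (j : ℕ) + 2 := by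
  rw [Fin.succAbove]
  rw [if_neg]
  · simp
  · simp [Fin.lt_def, Fin.val_one]

lemma succAbove_one_zero (n : ℕ) :
    ((1 : Fin (n+2)).succAbove (0 : Fin (n+1))) = 0 := by
  rw [Fin.succAbove, if_pos]
  · rfl
  · simp [Fin.lt_def]

lemma sub11 (n : ℕ) (x : ℂ) :
    ((Mmat (n+2) x).submatrix Fin.succ ((1 : Fin (n+2)).succAbove)).submatrix Fin.succ Fin.succ
      = Mmat n x := by
  ext i j
  simp only [submatrix_apply, Mmat, of_apply, Fin.val_succ, succAbove_one_val]
  have h1 : ((i:ℕ)+1+1 = (j:ℕ)+2) ↔ ((i:ℕ) = (j:ℕ)) := by omega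
  have h2 : ((i:ℕ)+1+1+1 = (j:ℕ)+2 ∨ (j:ℕ)+2+1 = (i:ℕ)+1+1) ↔ ((i:ℕ)+1 = (j:ℕ) ∨ (j:ℕ)+1 = (i:ℕ)) := by omega
  simp only [h1, h2]


lemma P_rec (n : ℕ) (x : ℂ) : P (n+2) x = P (n+1) x - x^2 * P n x := by
  have e00 : Mmat (n+2) x 0 0 = 1 := by simp [Mmat]
  have e01 : Mmat (n+2) x 0 1 = x := by
    simp [Mmat, Fin.val_one]
  have etail : ∀ j : Fin n, Mmat (n+2) x 0 j.succ.succ = 0 := by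
    intro j
    simp only [Mmat, of_apply, Fin.val_succ, Fin.val_zero]
    simp
  have hdet := Matrix.det_succ_row_zero (Mmat (n+2) x)
  rw [Fin.sum_univ_succ, Fin.sum_univ_succ] at hdet
  rw [Finset.sum_eq_zero (fun j _ => by rw [etail j]; ring)] at hdet
  rw [Fin.succ_zero_eq_one] at hdet
  simp only [Fin.succAbove_zero] at hdet
  rw [e00, e01, sub00] at hdet
  -- second minor
  set N := (Mmat (n+2) x).submatrix Fin.succ ((1 : Fin (n+2)).succAbove) with hN
  have eN0 : N 0 0 = x := by
    simp only [hN, submatrix_apply, succAbove_one_zero]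
    simp [Mmat, Fin.val_one]
  have eNtail : ∀ i : Fin n, N i.succ 0 = 0 := by
    intro i
    simp only [hN, submatrix_apply, succAbove_one_zero]
    simp only [Mmat, of_apply, Fin.val_succ, Fin.val_zero]
    simp
  have hdet2 := Matrix.det_succ_column_zero N
  rw [Fin.sum_univ_succ] at hdet2
  rw [Finset.sum_eq_zero (fun i _ => by rw [eNtail i]; ring)] at hdet2
  rw [eN0, Fin.succAbove_zero] at hdet2
  have : N.submatrix Fin.succ Fin.succ = Mmat n x := sub11 n x
  rw [this] at hdet2
  norm_num at hdet hdet2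
  show (Mmat (n+2) x).det = _
  rw [hdet, hdet2]
  show _ = (Mmat (n+1) x).det - x^2 * (Mmat n x).det
  ring

noncomputable def Q (x : ℂ) : ℕ → ℂ
  | 0 => 1
  | 1 => 1
  | (n+2) => Q x (n+1) - x^2 * Q x n

lemma Q_rec (x : ℂ) (n : ℕ) : Q x (n+2) = Q x (n+1) - x^2 * Q x n := rfl

lemma P_eq_Q (x : ℂ) : ∀ n, P n x = Q x n := by
  intro n
  induction n using Nat.strong_induction_on with
  | _ n ih =>
    match n with
    | 0 => simpa [Q] using P_zero x
    | 1 => simpa [Q] using P_one x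
    | (m+2) =>
      rw [P_rec, Q_rec, ih (m+1) (by omega), ih m (by omega)]

lemma Q_add (x : ℂ) : ∀ a b, Q x (a+b+2) = Q x (a+1) * Q x (b+1) - x^2 * Q x a * Q x b := by
  intro a
  induction a with
  | zero => intro b; rw [Q_rec]; simp [Q]
  | succ a ih =>
    intro b
    have h := ih (b+1)
    rw [show a + 1 + b + 2 = a + (b+1) + 2 by omega, h, Q_rec, Q_rec]
    ring

lemma Q_cassini (x : ℂ) : ∀ k, Q x (k+2) * Q x k - Q x (k+1)^2 = -x^(2*(k+1)) := by
  intro k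
  induction k with
  | zero => simp [Q_rec, Q]
  | succ k ih =>
    rw [Q_rec x (k+1), Q_rec x k] at *
    linear_combination x^2 * ih

theorem P_odd_minus_power (n : ℕ) (hn : 1 < n) (x : ℂ) :
    P (2 * n - 1) x - x ^ (2 * n - 1) =
      (P n x - x * P (n - 1) x) * (P (n - 1) x + x * P (n - 2) x) := by
  obtain ⟨m, rfl⟩ : ∃ m, n = m + 2 := ⟨n - 2, by omega⟩
  rw [show 2 * (m+2) - 1 = (m+1) + m + 2 by omega,
      show m + 2 - 1 = m + 1 by omega, show m + 2 - 2 = m by omega]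
  rw [P_eq_Q, P_eq_Q, P_eq_Q, P_eq_Q, Q_add]
  have hc := Q_cassini x m
  rw [show (m+1) + 1 = m + 2 by omega]
  linear_combination (-x) * hc
end

section
/- The set of complex roots of P_n(x) is exactly { 1/(2cos(kπ/(n+1))) : 1 ≤ k ≤ n, k ≠ (n+1)/2 }. In particular, P_n has n distinct real roots when n is even and n−1 distinct real roots when n is odd. -/
open Matrix Polynomial

noncomputable def MmatP (n : ℕ) : Matrix (Fin n) (Fin n) (Polynomial ℂ) :=
  Matrix.of fun i j =>
    if (i : ℕ) = (j : ℕ) then 1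
    else if (i : ℕ) + 1 = (j : ℕ) ∨ (j : ℕ) + 1 = (i : ℕ) then Polynomial.X else 0

noncomputable def Ppoly (n : ℕ) : Polynomial ℂ := (MmatP n).det

lemma Ppoly_zero : Ppoly 0 = 1 := by
  simp [Ppoly, Matrix.det_fin_zero]

lemma Ppoly_one : Ppoly 1 = 1 := by
  simp [Ppoly, Matrix.det_fin_one, MmatP]

lemma Ppoly_rec (n : ℕ) : Ppoly (n+2) = Ppoly (n+1) - X^2 * Ppoly n := by
  have h1 : (MmatP (n+2)).submatrix Fin.succ ((0 : Fin (n+2)).succAbove) = MmatP (n+1) := by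
    ext i j
    simp [MmatP, Fin.succAbove, Fin.lt_iff_val_lt_val]
  set B : Matrix (Fin (n+1)) (Fin (n+1)) (Polynomial ℂ) :=
    (MmatP (n+2)).submatrix Fin.succ ((1 : Fin (n+2)).succAbove) with hB
  have h2 : B.submatrix Fin.succ Fin.succ = MmatP n := by
    ext i j
    have hs : ((1 : Fin (n+2)).succAbove j.succ : ℕ) = (j : ℕ) + 2 := by
      simp [Fin.succAbove, Fin.lt_iff_val_lt_val]
    simp [hB, MmatP, Matrix.submatrix_apply, Fin.succAbove, Fin.lt_iff_val_lt_val, hs]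
  have hB0 : ∀ i : Fin (n+1), B i 0 = if (i:ℕ) = 0 then X else 0 := by
    intro i
    have : ((1 : Fin (n+2)).succAbove 0 : ℕ) = 0 := by
      simp [Fin.succAbove, Fin.lt_iff_val_lt_val]
    simp [hB, MmatP, Matrix.submatrix_apply, this]
  have hdetB : B.det = X * Ppoly n := by
    rw [Matrix.det_succ_column_zero]
    rw [Fin.sum_univ_succ]
    simp only [hB0]
    rw [Finset.sum_eq_zero (fun i _ => by simp)]
    simp [h2, Ppoly]
  rw [Ppoly, Matrix.det_succ_row_zero, Fin.sum_univ_succ, Fin.sum_univ_succ]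
  have hrow : ∀ j : Fin n, (MmatP (n+2)) 0 j.succ.succ = 0 := by
    intro j; simp [MmatP]
  simp only [hrow, mul_zero, zero_mul, Finset.sum_const_zero, add_zero]
  rw [h1]
  have : (Fin.succ 0 : Fin (n+2)) = 1 := rfl
  rw [this, ← hB, hdetB]
  simp [MmatP, Ppoly]
  ring

lemma eval_formula (n : ℕ) (θ : ℝ) (hc : Real.cos θ ≠ 0) :
    (Ppoly n).eval (1/(2*(Real.cos θ : ℂ))) * ((Real.sin θ : ℂ) * (2*(Real.cos θ : ℂ))^n)
      = Complex.sin (((n : ℂ)+1) * (θ : ℂ)) := by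
  set c : ℂ := (Real.cos θ : ℂ) with hcdef
  set s : ℂ := (Real.sin θ : ℂ) with hsdef
  have hc' : c ≠ 0 := by simpa [hcdef] using Complex.ofReal_ne_zero.mpr hc
  have hcos : Complex.cos (θ : ℂ) = c := (Complex.ofReal_cos θ).symm
  have hsin : Complex.sin (θ : ℂ) = s := (Complex.ofReal_sin θ).symm
  induction n using Nat.twoStepInduction with
  | zero => simp [Ppoly_zero, hsin]
  | one =>
    rw [Ppoly_one]
    have : ((1 : ℕ) : ℂ) + 1 = 2 := by norm_num
    rw [this, Complex.sin_two_mul, hsin, hcos, eval_one]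
    ring
  | more n IH1 IH2 =>
    have key : Complex.sin (((n:ℂ)+3)*(θ:ℂ))
        = 2*c*Complex.sin (((n:ℂ)+2)*(θ:ℂ)) - Complex.sin (((n:ℂ)+1)*(θ:ℂ)) := by
      have h1 : ((n:ℂ)+3)*(θ:ℂ) = ((n:ℂ)+2)*(θ:ℂ) + θ := by ring
      have h2 : ((n:ℂ)+1)*(θ:ℂ) = ((n:ℂ)+2)*(θ:ℂ) - θ := by ring
      rw [h1, h2, Complex.sin_add, Complex.sin_sub, hcos]
      ring
    have hz : (1/(2*c))^2 * (2*c)^2 = 1 := by field_simp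
    rw [Ppoly_rec]
    have hcast : ((n+2 : ℕ) : ℂ) + 1 = (n:ℂ) + 3 := by push_cast; ring
    have hcast2 : ((n+1 : ℕ) : ℂ) + 1 = (n:ℂ) + 2 := by push_cast; ring
    rw [hcast, key]
    rw [hcast2] at IH2
    calc ((Ppoly (n+1) - X^2 * Ppoly n).eval (1/(2*c))) * (s * (2*c)^(n+2))
        = ((Ppoly (n+1)).eval (1/(2*c)) * (s*(2*c)^(n+1))) * (2*c)
          - ((1/(2*c))^2*(2*c)^2) * ((Ppoly n).eval (1/(2*c)) * (s*(2*c)^n)) := by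
          simp only [eval_sub, eval_mul, eval_pow, eval_X]; ring
      _ = 2*c*Complex.sin (((n:ℂ)+2)*(θ:ℂ)) - Complex.sin (((n:ℂ)+1)*(θ:ℂ)) := by
          rw [IH2, IH1, hz]; ring

lemma Ppoly_natDegree_le (n : ℕ) : (Ppoly n).natDegree ≤ 2*(n/2) := by
  induction n using Nat.twoStepInduction with
  | zero => simp [Ppoly_zero]
  | one => simp [Ppoly_one]
  | more n IH1 IH2 =>
    rw [Ppoly_rec]
    refine le_trans (natDegree_sub_le _ _) ?_
    have h1 : (X^2 * Ppoly n : Polynomial ℂ).natDegree ≤ 2 + (Ppoly n).natDegree := by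
      refine le_trans (natDegree_mul_le) ?_
      simp [natDegree_X_pow]
    have : (n+2)/2 = n/2 + 1 := by omega
    have h2 : (n+1)/2 ≤ (n+2)/2 := by omega
    simp only [max_le_iff]
    constructor
    · omega
    · omega

lemma Ppoly_eval_zero (n : ℕ) : (Ppoly n).eval 0 = 1 := by
  induction n using Nat.twoStepInduction with
  | zero => simp [Ppoly_zero]
  | one => simp [Ppoly_one]
  | more n IH1 IH2 => simp [Ppoly_rec, IH1, IH2]

lemma Ppoly_ne_zero (n : ℕ) : Ppoly n ≠ 0 := by
  intro h
  have := Ppoly_eval_zero n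
  rw [h] at this
  simp at this

lemma cos_ne_zero_of (n k : ℕ) (hk1 : 1 ≤ k) (hk2 : k ≤ n) (hk3 : 2*k ≠ n+1) :
    Real.cos ((k : ℝ) * Real.pi / (n + 1)) ≠ 0 := by
  intro h
  rw [Real.cos_eq_zero_iff] at h
  obtain ⟨m, hm⟩ := h
  have hpi := Real.pi_ne_zero
  have hn1 : ((n : ℝ) + 1) ≠ 0 := by positivity
  have key : (2 * (k:ℝ)) = (2*(m:ℝ)+1) * ((n:ℝ)+1) := by
    field_simp at hm
    nlinarith [hm, Real.pi_pos]
  have keyZ : (2 * (k:ℤ)) = (2*m+1) * ((n:ℤ)+1) := by exact_mod_cast key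
  rcases lt_trichotomy m 0 with h1 | h1 | h1
  · have : (2*m+1) * ((n:ℤ)+1) ≤ (-1) * ((n:ℤ)+1) := by
      apply mul_le_mul_of_nonneg_right (by omega) (by positivity)
    omega
  · subst h1; omega
  · have : 3 * ((n:ℤ)+1) ≤ (2*m+1) * ((n:ℤ)+1) := by
      apply mul_le_mul_of_nonneg_right (by omega) (by positivity)
    omega

lemma theta_mem (n k : ℕ) (hk1 : 1 ≤ k) (hk2 : k ≤ n) :
    0 < (k : ℝ) * Real.pi / (n + 1) ∧ (k : ℝ) * Real.pi / (n + 1) < Real.pi := by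
  have hpi := Real.pi_pos
  have hn1 : (0:ℝ) < (n : ℝ) + 1 := by positivity
  have hk : (0:ℝ) < (k:ℝ) := by exact_mod_cast hk1
  constructor
  · apply div_pos (by positivity) hn1
  · rw [div_lt_iff₀ hn1]
    have : (k : ℝ) < (n : ℝ) + 1 := by exact_mod_cast Nat.lt_succ_of_le hk2
    nlinarith

theorem P_roots (n : ℕ) (hn : 1 ≤ n) :
    ({z : ℂ | (Ppoly n).eval z = 0} =
      {z : ℂ | ∃ k : ℕ, 1 ≤ k ∧ k ≤ n ∧ 2 * k ≠ n + 1 ∧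
        z = 1 / (2 * Complex.cos (((k : ℝ) * Real.pi / (n + 1) : ℝ) : ℂ))}) ∧
    ({x : ℝ | (Ppoly n).eval (x : ℂ) = 0}.ncard = if Even n then n else n - 1) := by
  classical
  set f : ℕ → ℝ := fun k => 1/(2*Real.cos ((k:ℝ)*Real.pi/(n+1))) with hf
  set g : ℕ → ℂ := fun k => ((f k : ℝ) : ℂ) with hg
  have hcoe : ∀ k : ℕ,
      (1 / (2 * Complex.cos (((k : ℝ) * Real.pi / (n + 1) : ℝ) : ℂ)) : ℂ) = g k := by
    intro k
    simp only [hg, hf, ← Complex.ofReal_cos]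
    push_cast
    ring
  set R := {z : ℂ | (Ppoly n).eval z = 0} with hR
  set S := {z : ℂ | ∃ k : ℕ, 1 ≤ k ∧ k ≤ n ∧ 2 * k ≠ n + 1 ∧
        z = 1 / (2 * Complex.cos (((k : ℝ) * Real.pi / (n + 1) : ℝ) : ℂ))} with hS
  set T := {x : ℝ | (Ppoly n).eval (x : ℂ) = 0} with hT
  -- S ⊆ R
  have hSsub : S ⊆ R := by
    rintro z ⟨k, hk1, hk2, hk3, rfl⟩
    set θ : ℝ := (k:ℝ)*Real.pi/(n+1) with hθ
    have hc : Real.cos θ ≠ 0 := cos_ne_zero_of n k hk1 hk2 hk3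
    obtain ⟨hθ1, hθ2⟩ := theta_mem n k hk1 hk2
    have hs : Real.sin θ ≠ 0 := ne_of_gt (Real.sin_pos_of_pos_of_lt_pi hθ1 hθ2)
    have hef := eval_formula n θ hc
    have hang : ((n:ℂ)+1) * (θ:ℂ) = (((k:ℝ)*Real.pi : ℝ) : ℂ) := by
      have hn1 : ((n:ℝ)+1) ≠ 0 := by positivity
      rw [hθ]
      push_cast
      field_simp
    rw [hang, ← Complex.ofReal_sin, Real.sin_nat_mul_pi] at hef
    have hnz : ((Real.sin θ : ℂ) * (2*(Real.cos θ : ℂ))^n) ≠ 0 := by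
      apply mul_ne_zero
      · exact Complex.ofReal_ne_zero.mpr hs
      · apply pow_ne_zero
        apply mul_ne_zero two_ne_zero
        exact Complex.ofReal_ne_zero.mpr hc
    have : (Ppoly n).eval (1/(2*(Real.cos θ : ℂ))) = 0 := by
      have := mul_eq_zero.mp (by rw [hef]; norm_num)
      tauto
    show (Ppoly n).eval _ = 0
    rw [show (1 / (2 * Complex.cos ((θ : ℝ) : ℂ)) : ℂ) = 1/(2*(Real.cos θ : ℂ)) by
      rw [← Complex.ofReal_cos]]
    exact this
  -- cardinality of the index set
  set K : Finset ℕ := (Finset.Icc 1 n).filter (fun k => 2*k ≠ n+1) with hKdef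
  have hK : K.card = 2*(n/2) := by
    rcases Nat.even_or_odd n with ⟨m, hm⟩ | ⟨m, hm⟩
    · have hKeq : K = Finset.Icc 1 n := by
        apply Finset.filter_true_of_mem
        intro k _
        omega
      rw [hKeq, Nat.card_Icc]
      omega
    · have hKeq : K = Finset.Icc 1 n \ {m+1} := by
        ext k
        simp only [hKdef, Finset.mem_filter, Finset.mem_Icc, Finset.mem_sdiff,
          Finset.mem_singleton]
        omega
      rw [hKeq, Finset.card_sdiff_of_subset (by simp [Finset.singleton_subset_iff, Finset.mem_Icc]; omega)]
      rw [Nat.card_Icc]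
      simp
      omega
  -- injectivity
  have hinj : Set.InjOn g ↑K := by
    intro k1 hk1 k2 hk2 he
    simp only [hKdef, Finset.coe_filter, Finset.mem_Icc, Set.mem_setOf_eq] at hk1 hk2
    obtain ⟨⟨h11, h12⟩, h13⟩ := hk1
    obtain ⟨⟨h21, h22⟩, h23⟩ := hk2
    have hc1 : Real.cos ((k1:ℝ)*Real.pi/(n+1)) ≠ 0 := cos_ne_zero_of n k1 h11 h12 h13
    have hc2 : Real.cos ((k2:ℝ)*Real.pi/(n+1)) ≠ 0 := cos_ne_zero_of n k2 h21 h22 h23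
    have hef : f k1 = f k2 := by
      have := he
      simp only [hg] at this
      exact_mod_cast this
    have hcos : Real.cos ((k1:ℝ)*Real.pi/(n+1)) = Real.cos ((k2:ℝ)*Real.pi/(n+1)) := by
      simp only [hf] at hef
      rw [one_div, one_div, _root_.inv_inj, mul_right_inj' two_ne_zero] at hef
      exact hef
    obtain ⟨hb11, hb12⟩ := theta_mem n k1 h11 h12
    obtain ⟨hb21, hb22⟩ := theta_mem n k2 h21 h22
    have hteq := Real.injOn_cos ⟨le_of_lt hb11, le_of_lt hb12⟩ ⟨le_of_lt hb21, le_of_lt hb22⟩ hcos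
    have hpi := Real.pi_ne_zero
    have hn1 : ((n:ℝ)+1) ≠ 0 := by positivity
    field_simp at hteq
    exact_mod_cast hteq
  -- S as an image
  have hSeq : S = g '' ↑K := by
    ext z
    constructor
    · rintro ⟨k, h1, h2, h3, rfl⟩
      exact ⟨k, by simp [hKdef, Finset.mem_filter, Finset.mem_Icc]; omega, (hcoe k).symm⟩
    · rintro ⟨k, hkK, rfl⟩
      simp only [hKdef, Finset.coe_filter, Finset.mem_Icc, Set.mem_setOf_eq] at hkK
      exact ⟨k, hkK.1.1, hkK.1.2, hkK.2, (hcoe k).symm⟩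
  have hScard : S.ncard = 2*(n/2) := by
    rw [hSeq, Set.ncard_image_of_injOn hinj, Set.ncard_coe_finset, hK]
  -- R is finite with few elements
  have hfin : R.Finite := Polynomial.finite_setOf_isRoot (Ppoly_ne_zero n)
  have hRcard : R.ncard ≤ 2*(n/2) := by
    have hset : R = ↑(Ppoly n).roots.toFinset := by
      ext z
      simp [hR, Multiset.mem_toFinset, mem_roots', Ppoly_ne_zero n, IsRoot]
    rw [hset, Set.ncard_coe_finset]
    exact le_trans (Multiset.toFinset_card_le _)
      (le_trans ((Ppoly n).card_roots') (Ppoly_natDegree_le n))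
  have hRS : R = S := (Set.eq_of_subset_of_ncard_le hSsub (hRcard.trans hScard.ge) hfin).symm
  refine ⟨hRS, ?_⟩
  -- real roots count
  have himg : Complex.ofReal '' T = R := by
    apply Set.Subset.antisymm
    · rintro _ ⟨x, hx, rfl⟩
      exact hx
    · intro z hz
      have hzS : z ∈ S := hRS ▸ hz
      obtain ⟨k, h1, h2, h3, hzeq⟩ := hzS
      refine ⟨f k, ?_, ?_⟩
      · show (Ppoly n).eval ((f k : ℝ) : ℂ) = 0
        rw [show ((f k : ℝ) : ℂ) = g k from rfl, ← hcoe k, ← hzeq]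
        exact hz
      · rw [hzeq, hcoe k]
  have hTcard : T.ncard = R.ncard := by
    rw [← himg, Set.ncard_image_of_injective T Complex.ofReal_injective]
  have hRcard' : R.ncard = 2*(n/2) := by rw [hRS, hScard]
  rw [hTcard, hRcard']
  rcases Nat.even_or_odd n with he | ho
  · rw [if_pos he]
    obtain ⟨m, hm⟩ := he
    omega
  · rw [if_neg (Nat.not_even_iff_odd.mpr ho)]
    obtain ⟨m, hm⟩ := ho
    omega
end

section
/- Let n ≥ 3 be odd. Then there is no n×n complex symmetric matrix A = (a_{i,j})_{0 ≤ i,j ≤ n−1}, necessarily singular, with rank(A) ≤ 2, a_{i,i} = 1 for all i and a_{i,i+1 mod n} = 0 for all i (so also a_{0,n−1} = 0). -/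
open Matrix

lemma rank_submatrix_le'' {m k : ℕ} (A : Matrix (Fin m) (Fin m) ℂ)
    (r c : Fin k → Fin m) : (A.submatrix r c).rank ≤ A.rank := by
  have h : A.submatrix r c =
      (Matrix.of fun (i : Fin k) (l : Fin m) => if l = r i then (1:ℂ) else 0) * A *
      (Matrix.of fun (l : Fin m) (j : Fin k) => if l = c j then (1:ℂ) else 0) := by
    ext i j
    simp [Matrix.mul_apply, Finset.sum_ite_eq, Finset.sum_ite_eq', ite_mul, mul_ite,
      Finset.mul_sum, Finset.sum_mul]
  rw [h]
  exact le_trans (Matrix.rank_mul_le_left _ _) (Matrix.rank_mul_le_right _ _)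

lemma det_zero_of_rank_le_two (B : Matrix (Fin 3) (Fin 3) ℂ) (h : B.rank ≤ 2) :
    B.det = 0 := by
  by_contra hd
  have : IsUnit B := (Matrix.isUnit_iff_isUnit_det B).mpr (isUnit_iff_ne_zero.mpr hd)
  have h3 := Matrix.rank_of_isUnit B this
  simp [Fintype.card_fin] at h3
  omega

theorem no_singular_low_rank_odd (n : ℕ) (hn : 3 ≤ n) (hodd : Odd n) :
    ¬ ∃ A : Matrix (Fin n) (Fin n) ℂ, A.IsSymm ∧ (∀ i, A i i = 1) ∧
      (∀ i : Fin n, A i ⟨((i : ℕ) + 1) % n, Nat.mod_lt _ (by omega)⟩ = 0) ∧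
      A.det = 0 ∧ A.rank ≤ 2 := by
  rintro ⟨A, hsym, hdiag, hsup, -, hrank⟩
  set i0 : Fin n := ⟨0, by omega⟩ with hi0
  set i1 : Fin n := ⟨1, by omega⟩ with hi1
  -- A 0 1 = 0 and A 1 0 = 0
  have h01 : A i0 i1 = 0 := by
    have := hsup i0
    convert this using 2
    exact (Fin.ext (by simp [hi0, hi1, Nat.mod_eq_of_lt (show 1 < n by omega)])).symm
  have h10 : A i1 i0 = 0 := (hsym.apply i0 i1).trans h01
  -- every 3×3 minor with rows/cols {0,1,·} vanishes
  have h3 : ∀ i j : Fin n, A i j = A i i0 * A i0 j + A i i1 * A i1 j := by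
    intro i j
    have hB : (A.submatrix ![i0, i1, i] ![i0, i1, j]).det = 0 :=
      det_zero_of_rank_le_two _ (le_trans (rank_submatrix_le'' A _ _) hrank)
    rw [Matrix.det_fin_three] at hB
    simp only [Matrix.submatrix_apply, Matrix.cons_val_zero, Matrix.cons_val_one,
      Matrix.head_cons, Matrix.cons_val_two, Matrix.tail_cons, Matrix.head_fin_const] at hB
    rw [hdiag i0, hdiag i1, h01, h10] at hB
    linear_combination hB
  set x : Fin n → ℂ := fun i => A i i0 with hx
  set y : Fin n → ℂ := fun i => A i i1 with hy
  have h4 : ∀ i j : Fin n, A i j = x i * x j + y i * y j := by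
    intro i j
    rw [h3 i j, hsym.apply j i0, hsym.apply j i1]
  have hP : ∀ i : Fin n, x i * x i + y i * y i = 1 := fun i => by
    rw [← h4 i i, hdiag i]
  -- the sequence z
  set z : ℕ → ℂ := fun k => x ⟨k % n, Nat.mod_lt _ (by omega)⟩ +
      Complex.I * y ⟨k % n, Nat.mod_lt _ (by omega)⟩ with hz
  have step : ∀ k : ℕ, z (k + 1) ^ 2 = - z k ^ 2 := by
    intro k
    set i : Fin n := ⟨k % n, Nat.mod_lt _ (by omega)⟩ with hi
    set j : Fin n := ⟨((i : ℕ) + 1) % n, Nat.mod_lt _ (by omega)⟩ with hj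
    have hjj : (⟨(k + 1) % n, Nat.mod_lt _ (by omega)⟩ : Fin n) = j := by
      apply Fin.ext
      simp only [hj, hi]
      rw [Nat.add_mod k 1 n, Nat.mod_eq_of_lt (show 1 < n by omega)]
    have hQ : x i * x j + y i * y j = 0 := by
      rw [← h4 i j]; exact hsup i
    have hz1 : z (k + 1) = x j + Complex.I * y j := by rw [hz]; simp only [hjj]
    have hz0 : z k = x i + Complex.I * y i := rfl
    rw [hz1, hz0]
    have hPi := hP i
    have hPj := hP j
    linear_combination (-(x i + Complex.I * y i)^2) * hPj -
      ((x j + Complex.I * y j)^2) * hPi +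
      2*(x i + Complex.I * y i)*(x j + Complex.I * y j)*hQ +
      ((x i * y j - y i * x j)^2) * Complex.I_sq
  have hind : ∀ m : ℕ, z m ^ 2 = (-1) ^ m * z 0 ^ 2 := by
    intro m
    induction m with
    | zero => simp
    | succ k ih => rw [step k, ih, pow_succ]; ring
  have e : (⟨n % n, Nat.mod_lt _ (by omega)⟩ : Fin n) = ⟨0 % n, Nat.mod_lt _ (by omega)⟩ :=
    Fin.ext (by simp)
  have hzn : z n = z 0 := by
    show x ⟨n % n, Nat.mod_lt _ (by omega)⟩ + Complex.I * y ⟨n % n, Nat.mod_lt _ (by omega)⟩ = _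
    rw [e]
  have hz0val : z 0 = 1 := by
    have h0 : (⟨0 % n, Nat.mod_lt _ (by omega)⟩ : Fin n) = i0 := Fin.ext (by simp [hi0])
    show x _ + Complex.I * y _ = 1
    rw [h0, hx, hy]
    simp only [hdiag i0, h01, mul_zero, add_zero]
  have := hind n
  rw [hzn, hz0val, Odd.neg_one_pow hodd] at this
  norm_num at this
end

section
/- Let n ≥ 3 and let x ∈ ℂ be nonzero. Let M_n^+(x) be the n×n symmetric circulant-type matrix with 1's on the diagonal and x in positions (i, i±1 mod n). Then the determinant of the submatrix of M_n^+(x) obtained by deleting row 0 and column n−1 equals x^{n−1} + (−1)^n · x · P_{n−2}(x), and det(M_n^+(x)) computed via expansion satisfies det(M_n^+(x)(\{0\},\{0\})) = P_{n−1}(x). -/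
open Matrix Polynomial

noncomputable def Mplus (n : ℕ) (x : ℂ) : Matrix (Fin n) (Fin n) ℂ :=
  Matrix.of fun i j =>
    if (i : ℕ) = (j : ℕ) then 1
    else if (i : ℕ) + 1 = (j : ℕ) ∨ (j : ℕ) + 1 = (i : ℕ) ∨
        ((i : ℕ) = 0 ∧ (j : ℕ) = n - 1) ∨ ((j : ℕ) = 0 ∧ (i : ℕ) = n - 1) then x else 0

theorem Mplus_minors (m : ℕ) (hm : 2 ≤ m) (x : ℂ) (hx : x ≠ 0) :
    ((Mplus (m + 1) x).submatrix (Fin.succAbove 0) (Fin.succAbove (Fin.last m))).det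
      = x ^ m + (-1) ^ (m + 1) * x * P (m - 1) x ∧
    ((Mplus (m + 1) x).submatrix (Fin.succAbove 0) (Fin.succAbove 0)).det = P m x := by
  obtain ⟨k, rfl⟩ : ∃ k, m = k + 2 := ⟨m - 2, by omega⟩
  constructor
  · -- part 1
    set B := (Mplus (k + 2 + 1) x).submatrix (Fin.succAbove 0) (Fin.succAbove (Fin.last (k + 2)))
      with hB
    have hBapp : ∀ i j : Fin (k + 2), B i j =
        if (i : ℕ) + 1 = (j : ℕ) then 1
        else if (i : ℕ) + 2 = (j : ℕ) ∨ (j : ℕ) = (i : ℕ) ∨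
            ((j : ℕ) = 0 ∧ (i : ℕ) = k + 1) then x else 0 := by
      intro i j
      simp only [hB, Matrix.submatrix_apply, Fin.succAbove_zero, Fin.succAbove_last, Mplus,
        Matrix.of_apply, Fin.val_succ, Fin.coe_castSucc]
      have hi := i.isLt
      have hj := j.isLt
      split_ifs <;> first | rfl | (exfalso; first | omega | simp_all | (simp_all; omega))
    rw [Matrix.det_succ_column_zero]
    rw [Fintype.sum_eq_add (0 : Fin (k + 2)) (Fin.last (k + 1))
      (by simp [Fin.ext_iff])
      (by
        intro i ⟨h0, hl⟩
        have h1 : B i 0 = 0 := by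
          rw [hBapp]
          have hi := i.isLt
          have h0' : (i : ℕ) ≠ 0 := by intro h; exact h0 (Fin.ext (by rw [h, Fin.val_zero]))
          have hl' : (i : ℕ) ≠ k + 1 := by simpa [Fin.ext_iff, Fin.last] using hl
          simp only [Fin.val_zero]
          split_ifs <;> first | rfl | (exfalso; simp only [false_or, true_and] at * <;> omega)
        simp [h1])]
    have e0 : B 0 0 = x := by rw [hBapp]; norm_num
    have el : B (Fin.last (k + 1)) 0 = x := by
      rw [hBapp]; simp [Fin.last]
    -- cofactor at 0 : upper triangular
    have c0 : (B.submatrix (Fin.succAbove 0) Fin.succ).det = x ^ (k + 1) := by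
      rw [Matrix.det_of_upperTriangular]
      · rw [Finset.prod_congr rfl (fun i _ => ?_), Finset.prod_const, Finset.card_univ,
          Fintype.card_fin]
        show B i.succ i.succ = x
        rw [hBapp]
        have hi := i.isLt
        simp only [Fin.val_succ]
        split_ifs <;> first | rfl | (exfalso; first | omega | simp_all | (simp_all; omega))
      · intro i j hij
        show B i.succ j.succ = 0
        rw [hBapp]
        have hij' : (j : ℕ) < (i : ℕ) := hij
        have hi := i.isLt
        simp only [Fin.val_succ]
        split_ifs with h1 h2
        · exfalso; omega
        · exfalso
          rcases h2 with h | h | ⟨h, -⟩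
          · omega
          · omega
          · exact h
        · rfl
    -- cofactor at last : Mmat (k+1)
    have cl : (B.submatrix (Fin.last (k + 1)).succAbove Fin.succ).det = P (k + 1) x := by
      have : B.submatrix (Fin.last (k + 1)).succAbove Fin.succ = Mmat (k + 1) x := by
        ext i j
        simp only [Matrix.submatrix_apply, Fin.succAbove_last]
        rw [hBapp]
        simp only [Mmat, Matrix.of_apply, Fin.val_succ, Fin.coe_castSucc]
        have hi := i.isLt
        split_ifs <;> first | rfl | (exfalso; first | omega | simp_all | (simp_all; omega))
      rw [this]; rfl
    rw [e0, el, c0, cl]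
    simp only [Fin.val_zero, Fin.val_last, pow_zero]
    have : (k + 2 : ℕ) - 1 = k + 1 := by omega
    rw [this]
    ring
  · -- part 2
    have : (Mplus (k + 2 + 1) x).submatrix (Fin.succAbove 0) (Fin.succAbove 0)
        = Mmat (k + 2) x := by
      ext i j
      simp only [Matrix.submatrix_apply, Fin.succAbove_zero, Mplus, Mmat, Matrix.of_apply,
        Fin.val_succ]
      have hi := i.isLt
      have hj := j.isLt
      split_ifs <;> first | rfl | (exfalso; first | omega | simp_all | (simp_all; omega))
    rw [this]; rfl
end
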